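/- Let (M,d) be a metric space with 2n elements such that all triangle inequalities for distinct triples are strict. Then TC(M) does not contain a subspace isometric to ℓ₁^{n+1}; equivalently, there do not exist n+1 completely unrelated nonzero transportation problems on M. -/
import Mathlib


/-- The transportation cost (Kantorovich–Rubinstein) norm of a finitely supported
zero-sum function `f` on a metric space: the infimum of costs of transportation
plans solving `f`. -/
noncomputable def tcCost {M : Type*} [MetricSpace M] (f : M →₀ ℝ) : ℝ :=
  sInf {c : ℝ | ∃ (n : ℕ) (a : Fin n → ℝ) (x y : Fin n → M),
    (∀ i, 0 ≤ a i) ∧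
    f = ∑ i, a i • (Finsupp.single (x i) 1 - Finsupp.single (y i) 1) ∧
    c = ∑ i, a i * dist (x i) (y i)}

namespace TCProof

open Finset

variable {M : Type*} [MetricSpace M] [Fintype M]

def tcSet (f : M →₀ ℝ) : Set ℝ :=
  {c : ℝ | ∃ (n : ℕ) (a : Fin n → ℝ) (x y : Fin n → M),
    (∀ i, 0 ≤ a i) ∧
    f = ∑ i, a i • (Finsupp.single (x i) 1 - Finsupp.single (y i) 1) ∧
    c = ∑ i, a i * dist (x i) (y i)}

lemma tcCost_eq_sInf (f : M →₀ ℝ) : tcCost f = sInf (tcSet f) := rfl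

lemma tcSet_nonneg {f : M →₀ ℝ} {c : ℝ} (hc : c ∈ tcSet f) : 0 ≤ c := by
  obtain ⟨m, a, x, y, ha, -, rfl⟩ := hc
  exact Finset.sum_nonneg fun i _ => mul_nonneg (ha i) dist_nonneg

lemma tcSet_bddBelow (f : M →₀ ℝ) : BddBelow (tcSet f) :=
  ⟨0, fun c hc => tcSet_nonneg hc⟩

lemma tcCost_zero : tcCost (0 : M →₀ ℝ) = 0 := by
  have h0 : (0:ℝ) ∈ tcSet (0 : M →₀ ℝ) :=
    ⟨0, Fin.elim0, Fin.elim0, Fin.elim0, fun i => i.elim0, by simp, by simp⟩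
  exact le_antisymm (csInf_le (tcSet_bddBelow _) h0)
    (le_csInf ⟨0, h0⟩ fun c hc => tcSet_nonneg hc)

lemma tcSet_nonempty {f : M →₀ ℝ} (h : tcCost f ≠ 0) : (tcSet f).Nonempty := by
  by_contra he
  rw [Set.not_nonempty_iff_eq_empty] at he
  rw [tcCost_eq_sInf, he, Real.sInf_empty] at h
  exact h rfl

noncomputable def edge (p : M × M) : M →₀ ℝ := Finsupp.single p.1 1 - Finsupp.single p.2 1

lemma matrix_mem (W : M × M → ℝ) (hW : ∀ p, 0 ≤ W p) (f : M →₀ ℝ)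
    (hf : f = ∑ p : M × M, W p • edge p) :
    (∑ p : M × M, W p * dist p.1 p.2) ∈ tcSet f := by
  let e := (Fintype.equivFin (M × M)).symm
  refine ⟨Fintype.card (M × M), fun i => W (e i), fun i => (e i).1, fun i => (e i).2,
    fun i => hW _, ?_, ?_⟩
  · rw [hf]
    exact (Equiv.sum_comp e fun p => W p • edge p).symm
  · exact (Equiv.sum_comp e fun p => W p * dist p.1 p.2).symm

lemma exists_matrix {f : M →₀ ℝ} {c : ℝ} (hc : c ∈ tcSet f) :
    ∃ W : M × M → ℝ, (∀ p, 0 ≤ W p) ∧ f = ∑ p : M × M, W p • edge p ∧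
      c = ∑ p : M × M, W p * dist p.1 p.2 := by
  classical
  obtain ⟨m, a, x, y, ha, hf, hcost⟩ := hc
  refine ⟨fun p => ∑ i ∈ univ.filter (fun i => (x i, y i) = p), a i,
    fun p => Finset.sum_nonneg fun i _ => ha i, ?_, ?_⟩
  · rw [hf, ← Finset.sum_fiberwise univ (fun i => (x i, y i))
      (fun i => a i • (Finsupp.single (x i) 1 - Finsupp.single (y i) 1))]
    refine Finset.sum_congr rfl fun p _ => ?_
    rw [Finset.sum_smul]
    refine Finset.sum_congr rfl fun i hi => ?_
    have hp := (Finset.mem_filter.1 hi).2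
    rw [edge, ← hp]
  · rw [hcost, ← Finset.sum_fiberwise univ (fun i => (x i, y i))
      (fun i => a i * dist (x i) (y i))]
    refine Finset.sum_congr rfl fun p _ => ?_
    rw [Finset.sum_mul]
    refine Finset.sum_congr rfl fun i hi => ?_
    have hp := (Finset.mem_filter.1 hi).2
    rw [← hp]

lemma eval_sum [DecidableEq M] (W : M × M → ℝ) (z : M) :
    (∑ p : M × M, W p • edge p) z = (∑ v, W (z, v)) - (∑ u, W (u, z)) := by
  have h1 : (∑ p : M × M, W p • edge p) z
      = ∑ p : M × M, W p * ((if p.1 = z then (1:ℝ) else 0) - (if p.2 = z then 1 else 0)) := by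
    rw [Finset.sum_apply']
    refine Finset.sum_congr rfl fun p _ => ?_
    simp [edge, Finsupp.single_apply]
  rw [h1]
  have e1 : ∑ p : M × M, W p * (if p.1 = z then (1:ℝ) else 0) = ∑ v, W (z, v) := by
    rw [Fintype.sum_prod_type]
    have h2 : ∀ u : M, ∑ v, W (u, v) * (if u = z then (1:ℝ) else 0)
        = if u = z then ∑ v, W (u, v) else 0 := by
      intro u; split_ifs <;> simp
    rw [Finset.sum_congr rfl fun u _ => h2 u, Fintype.sum_ite_eq']
  have e2 : ∑ p : M × M, W p * (if p.2 = z then (1:ℝ) else 0) = ∑ u, W (u, z) := by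
    rw [Fintype.sum_prod_type]
    refine Finset.sum_congr rfl fun u _ => ?_
    have h2 : ∀ v : M, W (u, v) * (if v = z then (1:ℝ) else 0)
        = if v = z then W (u, v) else 0 := by
      intro v; split_ifs <;> simp
    rw [Finset.sum_congr rfl fun v _ => h2 v, Fintype.sum_ite_eq']
  calc ∑ p : M × M, W p * ((if p.1 = z then (1:ℝ) else 0) - (if p.2 = z then 1 else 0))
      = (∑ p : M × M, W p * (if p.1 = z then (1:ℝ) else 0))
        - ∑ p : M × M, W p * (if p.2 = z then (1:ℝ) else 0) := by
        rw [← Finset.sum_sub_distrib]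
        exact Finset.sum_congr rfl fun p _ => by ring
    _ = _ := by rw [e1, e2]

lemma eval_sum' [DecidableEq M] (W : M × M → ℝ) (z : M) :
    (∑ p : M × M, W p • edge p) z
      = (∑ v ∈ univ.erase z, W (z, v)) - (∑ u ∈ univ.erase z, W (u, z)) := by
  rw [eval_sum, ← Finset.add_sum_erase univ (fun v => W (z, v)) (mem_univ z),
    ← Finset.add_sum_erase univ (fun u => W (u, z)) (mem_univ z)]
  ring

lemma improve {g h : M →₀ ℝ} {x : M} (hgx : 0 < g x) (hhx : h x < 0)
    {γ : ℝ} (hγ : ∀ u v : M, u ≠ x → v ≠ x → γ ≤ dist u x + dist x v - dist u v)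
    {cg ch : ℝ} (hcg : cg ∈ tcSet g) (hch : ch ∈ tcSet h) :
    ∃ c ∈ tcSet (g + h),
      c ≤ cg + ch - (min (g x) (-h x) / (Fintype.card M : ℝ)) * γ := by
  classical
  obtain ⟨Wg, hWg0, hWgf, hWgc⟩ := exists_matrix hcg
  obtain ⟨Wh, hWh0, hWhf, hWhc⟩ := exists_matrix hch
  set δ : ℝ := min (g x) (-h x) / (Fintype.card M : ℝ) with hδdef
  have hcardpos : (0:ℝ) < (Fintype.card M : ℝ) := by
    exact_mod_cast Fintype.card_pos_iff.2 ⟨x⟩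
  have hδpos : 0 < δ := div_pos (lt_min hgx (by linarith)) hcardpos
  have hcδ : (Fintype.card M : ℝ) * δ = min (g x) (-h x) := by
    rw [hδdef, mul_div_cancel₀ _ (ne_of_gt hcardpos)]
  have hgsum : g x ≤ ∑ v ∈ univ.erase x, Wg (x, v) := by
    have hev := eval_sum' Wg x
    rw [← hWgf] at hev
    have hin : 0 ≤ ∑ u ∈ univ.erase x, Wg (u, x) :=
      Finset.sum_nonneg fun u _ => hWg0 _
    linarith
  have hhsum : -h x ≤ ∑ u ∈ univ.erase x, Wh (u, x) := by
    have hev := eval_sum' Wh x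
    rw [← hWhf] at hev
    have hout : 0 ≤ ∑ v ∈ univ.erase x, Wh (x, v) :=
      Finset.sum_nonneg fun v _ => hWh0 _
    linarith
  have hcardle : ((univ.erase x).card : ℝ) ≤ (Fintype.card M : ℝ) := by
    exact_mod_cast (Finset.card_le_card (Finset.subset_univ _)).trans_eq Finset.card_univ
  have hbex : ∃ b ∈ univ.erase x, δ ≤ Wg (x, b) := by
    by_contra hcon
    push_neg at hcon
    have hne : (univ.erase x).Nonempty := by
      by_contra hemp
      rw [Finset.not_nonempty_iff_eq_empty] at hemp
      rw [hemp, Finset.sum_empty] at hgsum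
      linarith
    have hlt : ∑ v ∈ univ.erase x, Wg (x, v) < ∑ _v ∈ univ.erase x, δ :=
      Finset.sum_lt_sum_of_nonempty hne hcon
    rw [Finset.sum_const, nsmul_eq_mul] at hlt
    nlinarith [min_le_left (g x) (-h x)]
  have haex : ∃ a ∈ univ.erase x, δ ≤ Wh (a, x) := by
    by_contra hcon
    push_neg at hcon
    have hne : (univ.erase x).Nonempty := by
      by_contra hemp
      rw [Finset.not_nonempty_iff_eq_empty] at hemp
      rw [hemp, Finset.sum_empty] at hhsum
      linarith
    have hlt : ∑ u ∈ univ.erase x, Wh (u, x) < ∑ _u ∈ univ.erase x, δ :=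
      Finset.sum_lt_sum_of_nonempty hne hcon
    rw [Finset.sum_const, nsmul_eq_mul] at hlt
    nlinarith [min_le_right (g x) (-h x)]
  obtain ⟨b, hbmem, hbge⟩ := hbex
  obtain ⟨a, hamem, hage⟩ := haex
  have hbx : b ≠ x := Finset.ne_of_mem_erase hbmem
  have hax : a ≠ x := Finset.ne_of_mem_erase hamem
  set W' : M × M → ℝ := fun p => Wg p + Wh p
    + δ * ((if p = (a, b) then (1:ℝ) else 0) - (if p = (x, b) then 1 else 0)
          - (if p = (a, x) then 1 else 0)) with hW'def
  have hne1 : ((x, b) : M × M) ≠ (a, b) := fun hq => hax ((congrArg Prod.fst hq).symm)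
  have hne2 : ((x, b) : M × M) ≠ (a, x) := fun hq => hbx (congrArg Prod.snd hq)
  have hne3 : ((a, x) : M × M) ≠ (a, b) := fun hq => hbx ((congrArg Prod.snd hq).symm)
  have hW'0 : ∀ p, 0 ≤ W' p := by
    intro p
    rcases eq_or_ne p (x, b) with e1 | e1
    · subst e1
      simp only [hW'def, if_neg hne1, if_pos rfl, if_neg hne2, if_true]
      have := hWh0 (x, b)
      norm_num
      linarith
    rcases eq_or_ne p (a, x) with e2 | e2
    · subst e2
      simp only [hW'def, if_neg hne3, if_neg (Ne.symm hne2), if_pos rfl, if_true]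
      have := hWg0 (a, x)
      norm_num
      linarith
    rcases eq_or_ne p (a, b) with e3 | e3
    · subst e3
      have h1 := hWg0 (a, b); have h2 := hWh0 (a, b)
      simp only [hW'def, if_neg e1, if_neg e2, if_pos rfl]
      norm_num
      nlinarith [hδpos]
    · simp only [hW'def, if_neg e3, if_neg e1, if_neg e2]
      have h1 := hWg0 p; have h2 := hWh0 p
      ring_nf
      linarith
  have hedge : edge ((a, b) : M × M) - edge (x, b) - edge (a, x) = 0 := by
    simp only [edge]
    abel
  have hsolves : g + h = ∑ p : M × M, W' p • edge p := by
    have hexp : ∑ p : M × M, W' p • edge p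
        = (∑ p : M × M, Wg p • edge p) + (∑ p : M × M, Wh p • edge p)
          + δ • (edge ((a, b) : M × M) - edge (x, b) - edge (a, x)) := by
      simp only [hW'def, add_smul, mul_smul, sub_smul, ite_smul, one_smul, zero_smul]
      rw [Finset.sum_add_distrib, Finset.sum_add_distrib, ← Finset.smul_sum,
        Finset.sum_sub_distrib, Finset.sum_sub_distrib,
        Fintype.sum_ite_eq', Fintype.sum_ite_eq', Fintype.sum_ite_eq']
    rw [hexp, hedge, smul_zero, add_zero, ← hWgf, ← hWhf]
  have hcost : ∑ p : M × M, W' p * dist p.1 p.2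
      = cg + ch + δ * (dist a b - dist x b - dist a x) := by
    have hterm : ∀ p : M × M, W' p * dist p.1 p.2
        = Wg p * dist p.1 p.2 + Wh p * dist p.1 p.2
          + δ * ((if p = (a, b) then dist p.1 p.2 else 0)
            - (if p = (x, b) then dist p.1 p.2 else 0)
            - (if p = (a, x) then dist p.1 p.2 else 0)) := by
      intro p
      simp only [hW'def]
      split_ifs <;> ring
    rw [Finset.sum_congr rfl fun p _ => hterm p, Finset.sum_add_distrib,
      Finset.sum_add_distrib, ← Finset.mul_sum, Finset.sum_sub_distrib,
      Finset.sum_sub_distrib, Fintype.sum_ite_eq', Fintype.sum_ite_eq',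
      Fintype.sum_ite_eq', ← hWgc, ← hWhc]
  refine ⟨_, matrix_mem W' hW'0 (g + h) hsolves, ?_⟩
  rw [hcost]
  have hg' := hγ a b hax hbx
  nlinarith [mul_le_mul_of_nonneg_left hg' hδpos.le]

lemma tcCost_add_lt
    (hstrict : ∀ x y z : M, x ≠ y → y ≠ z → x ≠ z → dist x z < dist x y + dist y z)
    {g h : M →₀ ℝ} {x y : M} (hyx : y ≠ x) (hgx : 0 < g x) (hhx : h x < 0)
    (hg1 : tcCost g = 1) (hh1 : tcCost h = 1) : tcCost (g + h) < 2 := by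
  classical
  set s : Finset (M × M) := (univ.erase x) ×ˢ (univ.erase x) with hsdef
  have hsne : s.Nonempty := ⟨(y, y), by simp [hsdef, Finset.mem_product, hyx]⟩
  set γ := s.inf' hsne (fun p => dist p.1 x + dist x p.2 - dist p.1 p.2) with hγdef
  have hγpos : 0 < γ := by
    rw [hγdef, Finset.lt_inf'_iff hsne]
    rintro ⟨u, v⟩ hp
    rw [hsdef, Finset.mem_product] at hp
    have hu : u ≠ x := Finset.ne_of_mem_erase hp.1
    have hv : v ≠ x := Finset.ne_of_mem_erase hp.2
    rcases eq_or_ne u v with rfl | huv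
    · have hd := dist_pos.2 hu
      rw [dist_self, dist_comm x u]
      linarith
    · have := hstrict u x v hu (fun hxv => hv hxv.symm) huv
      linarith
  have hγle : ∀ u v : M, u ≠ x → v ≠ x → γ ≤ dist u x + dist x v - dist u v := by
    intro u v hu hv
    have hm : ((u, v) : M × M) ∈ s := by
      rw [hsdef, Finset.mem_product]
      exact ⟨Finset.mem_erase.2 ⟨hu, mem_univ u⟩, Finset.mem_erase.2 ⟨hv, mem_univ v⟩⟩
    rw [hγdef]
    exact Finset.inf'_le _ hm
  have hcardpos : (0:ℝ) < (Fintype.card M : ℝ) := by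
    exact_mod_cast Fintype.card_pos_iff.2 ⟨x⟩
  have hδpos : 0 < min (g x) (-h x) / (Fintype.card M : ℝ) :=
    div_pos (lt_min hgx (by linarith)) hcardpos
  set δ : ℝ := min (g x) (-h x) / (Fintype.card M : ℝ) with hδdef
  have hεpos : 0 < δ * γ / 4 := by positivity
  have hgne : tcCost g ≠ 0 := by rw [hg1]; norm_num
  have hhne : tcCost h ≠ 0 := by rw [hh1]; norm_num
  obtain ⟨cg, hcgm, hcglt⟩ := Real.lt_sInf_add_pos (tcSet_nonempty hgne) hεpos
  obtain ⟨ch, hchm, hchlt⟩ := Real.lt_sInf_add_pos (tcSet_nonempty hhne) hεpos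
  rw [← tcCost_eq_sInf, hg1] at hcglt
  rw [← tcCost_eq_sInf, hh1] at hchlt
  obtain ⟨c, hcm, hcle⟩ := improve hgx hhx hγle hcgm hchm
  have hle : tcCost (g + h) ≤ c := by
    rw [tcCost_eq_sInf]
    exact csInf_le (tcSet_bddBelow _) hcm
  have : c ≤ cg + ch - δ * γ := hcle
  nlinarith

end TCProof

open TCProof in
/-- If `M` has `2n` elements and all triangle inequalities for pairwise distinct triples
are strict, then `TC(M)` contains no subspace isometric to `ℓ₁^{n+1}`: there do not exist
`n+1` completely unrelated nonzero transportation problems on `M`. -/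
theorem no_ell1_n_plus_one {M : Type*} [MetricSpace M] [Fintype M]
    (n : ℕ) (hcard : Fintype.card M = 2 * n)
    (hstrict : ∀ x y z : M, x ≠ y → y ≠ z → x ≠ z → dist x z < dist x y + dist y z) :
    ¬ ∃ f : Fin (n + 1) → (M →₀ ℝ),
        (∀ i, (f i).sum (fun _ r => r) = 0) ∧
        (∀ i, f i ≠ 0) ∧
        (∀ a : Fin (n + 1) → ℝ,
          tcCost (∑ i, a i • ((tcCost (f i))⁻¹ • f i)) = ∑ i, |a i|) := by
  classical
  rintro ⟨f, hsum, hne, hiso⟩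
  set g : Fin (n + 1) → (M →₀ ℝ) := fun i => (tcCost (f i))⁻¹ • f i with hgdef
  have hone : ∀ i, tcCost (g i) = 1 := by
    intro i
    have hthis := hiso (fun k => if k = i then 1 else 0)
    have h1 : ∑ k, (if k = i then (1:ℝ) else 0) • g k = g i := by
      simp only [ite_smul, one_smul, zero_smul]
      exact Fintype.sum_ite_eq' i g
    have h2 : ∑ k, |if k = i then (1:ℝ) else 0| = 1 := by
      simp only [apply_ite abs, abs_one, abs_zero]
      exact Fintype.sum_ite_eq' i (fun _ => (1:ℝ))
    rw [h1, h2] at hthis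
    exact hthis
  have hfne0 : ∀ i, tcCost (f i) ≠ 0 := by
    intro i hc
    have hg0 : g i = 0 := by simp [hgdef, hc]
    have h1 := hone i
    rw [hg0, tcCost_zero] at h1
    norm_num at h1
  have hsupp : ∀ i, 2 ≤ (f i).support.card := by
    intro i
    by_contra hlt
    push_neg at hlt
    have hne' : (f i).support.Nonempty := Finsupp.support_nonempty_iff.2 (hne i)
    have hc1 : (f i).support.card = 1 := le_antisymm (by omega) hne'.card_pos
    obtain ⟨z, hz⟩ := Finset.card_eq_one.1 hc1
    have hs := hsum i
    rw [Finsupp.sum, hz, Finset.sum_singleton] at hs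
    have hzmem : z ∈ (f i).support := by rw [hz]; exact Finset.mem_singleton_self z
    exact (Finsupp.mem_support_iff.1 hzmem) hs
  have hdisj : ∀ i j : Fin (n + 1), i ≠ j → Disjoint (f i).support (f j).support := by
    intro i j hij
    rw [Finset.disjoint_left]
    by_contra hcon
    push_neg at hcon
    obtain ⟨x, hxi, hxj⟩ := hcon
    obtain ⟨y, hymem, hyx⟩ :=
      Finset.exists_mem_ne (s := (f i).support) (by have := hsupp i; omega) x
    have hgix : (g i) x ≠ 0 := by
      simp only [hgdef, Finsupp.smul_apply, smul_eq_mul]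
      exact mul_ne_zero (inv_ne_zero (hfne0 i)) (Finsupp.mem_support_iff.1 hxi)
    have hgjx : (g j) x ≠ 0 := by
      simp only [hgdef, Finsupp.smul_apply, smul_eq_mul]
      exact mul_ne_zero (inv_ne_zero (hfne0 j)) (Finsupp.mem_support_iff.1 hxj)
    obtain ⟨εi, habsi, hεipos⟩ : ∃ e : ℝ, |e| = 1 ∧ 0 < (e • g i) x := by
      rcases lt_trichotomy 0 ((g i) x) with hp | hp | hp
      · exact ⟨1, abs_one, by rw [Finsupp.smul_apply, smul_eq_mul]; linarith⟩
      · exact absurd hp.symm hgix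
      · exact ⟨-1, by norm_num, by rw [Finsupp.smul_apply, smul_eq_mul]; nlinarith⟩
    obtain ⟨εj, habsj, hεjneg⟩ : ∃ e : ℝ, |e| = 1 ∧ (e • g j) x < 0 := by
      rcases lt_trichotomy 0 ((g j) x) with hp | hp | hp
      · exact ⟨-1, by norm_num, by rw [Finsupp.smul_apply, smul_eq_mul]; nlinarith⟩
      · exact absurd hp.symm hgjx
      · exact ⟨1, abs_one, by rw [Finsupp.smul_apply, smul_eq_mul]; linarith⟩
    have hci : tcCost (εi • g i) = 1 := by
      have hthis := hiso (fun k => if k = i then εi else 0)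
      have h1 : ∑ k, (if k = i then εi else 0) • g k = εi • g i := by
        simp only [ite_smul, zero_smul]
        exact Fintype.sum_ite_eq' i (fun k => εi • g k)
      have h2 : ∑ k, |if k = i then εi else 0| = 1 := by
        have : ∀ k : Fin (n + 1), |if k = i then εi else 0| = if k = i then (1:ℝ) else 0 := by
          intro k; rcases eq_or_ne k i with rfl | h1
          · simp [habsi]
          · simp [h1]
        rw [Finset.sum_congr rfl fun k _ => this k]
        exact Fintype.sum_ite_eq' i (fun _ => (1:ℝ))
      rw [h1, h2] at hthis
      exact hthis
    have hcj : tcCost (εj • g j) = 1 := by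
      have hthis := hiso (fun k => if k = j then εj else 0)
      have h1 : ∑ k, (if k = j then εj else 0) • g k = εj • g j := by
        simp only [ite_smul, zero_smul]
        exact Fintype.sum_ite_eq' j (fun k => εj • g k)
      have h2 : ∑ k, |if k = j then εj else 0| = 1 := by
        have : ∀ k : Fin (n + 1), |if k = j then εj else 0| = if k = j then (1:ℝ) else 0 := by
          intro k; rcases eq_or_ne k j with rfl | h1
          · simp [habsj]
          · simp [h1]
        rw [Finset.sum_congr rfl fun k _ => this k]
        exact Fintype.sum_ite_eq' j (fun _ => (1:ℝ))
      rw [h1, h2] at hthis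
      exact hthis
    have hcij : tcCost (εi • g i + εj • g j) = 2 := by
      have hthis := hiso (fun k => if k = i then εi else if k = j then εj else 0)
      have hsplit : ∀ k, (if k = i then εi else if k = j then εj else 0)
          = (if k = i then εi else 0) + (if k = j then εj else 0) := by
        intro k
        rcases eq_or_ne k i with rfl | hk1
        · simp [hij]
        · rcases eq_or_ne k j with hk2 | hk2
          · simp [hk1, hk2, Ne.symm hij]
          · simp [hk1, hk2]
      have h1 : ∑ k, (if k = i then εi else if k = j then εj else 0) • g k
          = εi • g i + εj • g j := by
        rw [Finset.sum_congr rfl fun k _ => by rw [hsplit k]]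
        simp only [add_smul, ite_smul, zero_smul]
        rw [Finset.sum_add_distrib, Fintype.sum_ite_eq' i (fun k => εi • g k),
          Fintype.sum_ite_eq' j (fun k => εj • g k)]
      have h2 : ∑ k, |if k = i then εi else if k = j then εj else 0| = 2 := by
        rw [Finset.sum_congr rfl fun k _ => by rw [hsplit k]]
        have habs : ∀ k : Fin (n + 1),
            |(if k = i then εi else 0) + (if k = j then εj else 0)|
              = (if k = i then (1:ℝ) else 0) + (if k = j then 1 else 0) := by
          intro k
          rcases eq_or_ne k i with rfl | hk1
          · simp [hij, habsi]
          · rcases eq_or_ne k j with hk2 | hk2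
            · simp [hk1, hk2, Ne.symm hij, habsj]
            · simp [hk1, hk2]
        rw [Finset.sum_congr rfl fun k _ => habs k, Finset.sum_add_distrib,
          Fintype.sum_ite_eq' i (fun _ => (1:ℝ)), Fintype.sum_ite_eq' j (fun _ => (1:ℝ))]
        norm_num
      rw [h1, h2] at hthis
      exact hthis
    have hlt := tcCost_add_lt hstrict hyx hεipos hεjneg hci hcj
    rw [hcij] at hlt
    norm_num at hlt
  have hcard2 : 2 * (n + 1) ≤ 2 * n := by
    calc 2 * (n + 1) = ∑ _i : Fin (n + 1), 2 := by
          simp [Finset.sum_const, Finset.card_univ, mul_comm]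
      _ ≤ ∑ i : Fin (n + 1), (f i).support.card :=
          Finset.sum_le_sum fun i _ => hsupp i
      _ = (Finset.univ.biUnion fun i => (f i).support).card :=
          (Finset.card_biUnion fun i _ j _ hij => hdisj i j hij).symm
      _ ≤ Fintype.card M := Finset.card_le_univ _
      _ = 2 * n := hcard
  omega
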